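/- arXiv:1210.5723 — 4 statements merged into one kernel-verified Lean document; each statement's English description precedes it below -/
import Mathlib

section
/- (L^p Caccioppoli-type inequality.) Let q > −1 and let ρ be a positive C¹ function on Ω which is weakly p-subharmonic, i.e. ∫_Ω |∇ρ|^{p−2} ⟨∇ρ, ∇φ⟩ dx ≤ 0 for every nonnegative φ ∈ C_c^1(Ω), and assume ρ^q |∇ρ|^p and ρ^{p+q} are locally integrable on Ω. Then ((q+1)/p)^p ∫_Ω ρ^q |∇ρ|^p |u|^p dx ≤ ∫_Ω ρ^{p+q} |∇u|^p dx for every u ∈ C_c^∞(Ω). -/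
/-!
Test the weak inequality `Δ_p ρ ≥ 0` against `φ = ρ^(q+1) |u|^p`. Since
`∇φ = (q+1) ρ^q |u|^p ∇ρ + p ρ^(q+1) |u|^(p-2) u ∇u`, this gives
`(q+1) A + p G ≤ 0`, where `A = ∫ ρ^q |∇ρ|^p |u|^p` and `G` is the integral of the cross term
`ρ^(q+1) |u|^(p-2) u |∇ρ|^(p-2) ⟪∇ρ, ∇u⟫`. Cauchy–Schwarz and Young's inequality with weight
`c = (q+1)/p` bound `-G` by `(p-1)/p · c A + c^(1-p)/p · B`, with `B = ∫ ρ^(p+q) |∇u|^p`;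
eliminating `G` leaves `c A ≤ c^(1-p) B`, i.e. `c^p A ≤ B`.
-/

open MeasureTheory Set Filter Topology
open scoped RealInnerProductSpace

namespace Real

variable {p : ℝ}

lemma rpow_sub_two_mul_self (hp : 1 < p) {a : ℝ} (ha : 0 ≤ a) :
    a ^ (p - 2) * a = a ^ (p - 1) := by
  rw [← rpow_add_one' ha (by linarith)]
  ring_nf

lemma rpow_sub_two_mul_sq (hp : 1 < p) {a : ℝ} (ha : 0 ≤ a) : a ^ (p - 2) * a ^ 2 = a ^ p := by
  rw [sq, ← mul_assoc, rpow_sub_two_mul_self hp ha, ← rpow_add_one' ha (by linarith)]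
  ring_nf

lemma rpow_sub_one_mul_le_young (hp : 1 < p) {a b c : ℝ} (ha : 0 ≤ a) (hb : 0 ≤ b)
    (hc : 0 < c) : a ^ (p - 1) * b ≤ (p - 1) / p * c * a ^ p + c ^ (1 - p) / p * b ^ p := by
  have hp0 : p ≠ 0 := by positivity
  have amgm := geom_mean_le_arith_mean2_weighted (w₁ := (p - 1) / p) (w₂ := 1 / p)
    (p₁ := c * a ^ p) (p₂ := c ^ (1 - p) * b ^ p) (by bound) (by positivity) (by positivity)
    (by positivity) (by field_simp; ring)
  have h₁ : (c * a ^ p) ^ ((p - 1) / p) = c ^ ((p - 1) / p) * a ^ (p - 1) := by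
    rw [mul_rpow hc.le (by positivity), ← rpow_mul ha, mul_div_cancel₀ _ hp0]
  have h₂ : (c ^ (1 - p) * b ^ p) ^ (1 / p) = c ^ (-((p - 1) / p)) * b := by
    rw [mul_rpow (by positivity) (by positivity), ← rpow_mul hc.le, ← rpow_mul hb,
      mul_one_div_cancel hp0, rpow_one]
    congr 2; ring
  rw [h₁, h₂, rpow_neg hc.le] at amgm
  have hcpos : 0 < c ^ ((p - 1) / p) := by positivity
  calc a ^ (p - 1) * b
      = c ^ ((p - 1) / p) * a ^ (p - 1) * ((c ^ ((p - 1) / p))⁻¹ * b) := by field_simp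
    _ ≤ _ := amgm
    _ = _ := by ring

lemma rpow_mul_le_of_le_young (hp : 1 < p) {c A B G : ℝ} (hc : 0 < c)
    (hsub : p * c * A + p * G ≤ 0)
    (hyoung : -G ≤ (p - 1) / p * c * A + c ^ (1 - p) / p * B) : c ^ p * A ≤ B := by
  have hp0 : 0 < p := by linarith
  have hcA : c * A ≤ c ^ (1 - p) * B := by
    have := mul_le_mul_of_nonneg_left hyoung hp0.le
    field_simp at this
    linarith
  calc c ^ p * A = c ^ (p - 1) * (c * A) := by
        rw [← mul_assoc, ← rpow_add_one hc.ne']; ring_nf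
    _ ≤ c ^ (p - 1) * (c ^ (1 - p) * B) := by gcongr
    _ = B := by rw [← mul_assoc, ← rpow_add hc]; simp

end Real

lemma continuous_norm_rpow_sub_two_smul {E : Type*} [NormedAddCommGroup E] [NormedSpace ℝ E]
    {p : ℝ} (hp : 1 < p) : Continuous fun v : E => ‖v‖ ^ (p - 2) • v := by
  refine continuous_iff_continuousAt.2 fun v => ?_
  rcases eq_or_ne v 0 with rfl | hv
  · have hlim : Tendsto (fun w : E => ‖w‖ ^ (p - 1)) (𝓝 0) (𝓝 0) := by
      simpa [Real.zero_rpow (by linarith : p - 1 ≠ 0)] using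
        ((continuous_norm.rpow_const (p := p - 1) fun _ => Or.inr (by linarith)).tendsto (0 : E))
    refine (squeeze_zero_norm (fun w => le_of_eq ?_) hlim).trans (by simp)
    rw [norm_smul, Real.norm_of_nonneg (by positivity),
      Real.rpow_sub_two_mul_self hp (norm_nonneg w)]
  · exact (continuous_norm.continuousAt.rpow_const (Or.inl (norm_ne_zero_iff.2 hv))).smul
      continuousAt_id

lemma ContDiffOn.contDiff_of_tsupport_subset {E F : Type*} [NormedAddCommGroup E]
    [NormedSpace ℝ E] [NormedAddCommGroup F] [NormedSpace ℝ F] {f : E → F} {s : Set E}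
    {n : WithTop ℕ∞} (hf : ContDiffOn ℝ n f s) (hs : IsOpen s) (hfs : tsupport f ⊆ s) :
    ContDiff ℝ n f := by
  refine contDiff_iff_contDiffAt.2 fun x => ?_
  by_cases hx : x ∈ tsupport f
  · exact hf.contDiffAt (hs.mem_nhds (hfs hx))
  · exact contDiffAt_const.congr_of_eventuallyEq (notMem_tsupport_iff_eventuallyEq.1 hx)

lemma ContinuousOn.integrable_of_eq_zero_off {X : Type*} [TopologicalSpace X] [T2Space X]
    [MeasurableSpace X] [OpensMeasurableSpace X] {μ : Measure X} [IsFiniteMeasureOnCompacts μ]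
    {F : Type*} [NormedAddCommGroup F] {w : X → F} {s K : Set X} (hw : ContinuousOn w s)
    (hs : IsOpen s) (hK : IsCompact K) (hKs : K ⊆ s) (hw0 : ∀ x ∉ K, w x = 0) : Integrable w μ := by
  have hwK : tsupport w ⊆ K := closure_minimal (Function.support_subset_iff'.2 hw0) hK.isClosed
  exact (hw.continuous_of_tsupport_subset hs (hwK.trans hKs)).integrable_of_hasCompactSupport
    (hK.of_isClosed_subset (isClosed_tsupport w) hwK)

section InnerProductSpace

variable {E : Type*} [NormedAddCommGroup E] [InnerProductSpace ℝ E] {p : ℝ}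

lemma abs_norm_rpow_sub_two_mul_inner_le (hp : 1 < p) (a b : E) :
    |‖a‖ ^ (p - 2) * ⟪a, b⟫| ≤ ‖a‖ ^ (p - 1) * ‖b‖ := by
  rw [abs_mul, abs_of_nonneg (by positivity), ← Real.rpow_sub_two_mul_self hp (norm_nonneg a),
    mul_assoc]
  gcongr
  exact abs_real_inner_le_norm a b

lemma neg_cross_term_le_young (hp : 1 < p) {q c r : ℝ} (hc : 0 < c) (hr : 0 < r) (s : ℝ)
    (a b : E) :
    -(r ^ (q + 1) * (|s| ^ (p - 2) * s) * (‖a‖ ^ (p - 2) * ⟪a, b⟫)) ≤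
      (p - 1) / p * c * (r ^ q * ‖a‖ ^ p * |s| ^ p) +
        c ^ (1 - p) / p * (r ^ (p + q) * ‖b‖ ^ p) := by
  have hp0 : p ≠ 0 := by positivity
  have habs : |(|s| ^ (p - 2) * s)| = |s| ^ (p - 1) := by
    rw [abs_mul, abs_of_nonneg (by positivity), Real.rpow_sub_two_mul_self hp (abs_nonneg s)]
  have hA : (r ^ (q / p) * (‖a‖ * |s|)) ^ p = r ^ q * ‖a‖ ^ p * |s| ^ p := by
    rw [Real.mul_rpow (by positivity) (by positivity), ← Real.rpow_mul hr.le,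
      div_mul_cancel₀ _ hp0, Real.mul_rpow (norm_nonneg a) (abs_nonneg s), mul_assoc]
  have hB : (r ^ ((p + q) / p) * ‖b‖) ^ p = r ^ (p + q) * ‖b‖ ^ p := by
    rw [Real.mul_rpow (by positivity) (norm_nonneg b), ← Real.rpow_mul hr.le,
      div_mul_cancel₀ _ hp0]
  have hAB : (r ^ (q / p) * (‖a‖ * |s|)) ^ (p - 1) * (r ^ ((p + q) / p) * ‖b‖) =
      r ^ (q + 1) * |s| ^ (p - 1) * (‖a‖ ^ (p - 1) * ‖b‖) := by
    have hexp : q / p * (p - 1) + (p + q) / p = q + 1 := by field_simp; ring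
    rw [Real.mul_rpow (by positivity) (by positivity), ← Real.rpow_mul hr.le,
      Real.mul_rpow (norm_nonneg a) (abs_nonneg s), ← hexp, Real.rpow_add hr]
    ring
  calc _ ≤ |r ^ (q + 1) * (|s| ^ (p - 2) * s) * (‖a‖ ^ (p - 2) * ⟪a, b⟫)| := neg_le_abs _
    _ = r ^ (q + 1) * |s| ^ (p - 1) * |‖a‖ ^ (p - 2) * ⟪a, b⟫| := by
      rw [abs_mul, abs_mul, habs, abs_of_pos (by positivity)]
    _ ≤ r ^ (q + 1) * |s| ^ (p - 1) * (‖a‖ ^ (p - 1) * ‖b‖) := by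
      gcongr; exact abs_norm_rpow_sub_two_mul_inner_le hp a b
    _ ≤ _ := by
      rw [← hAB, ← hA, ← hB]
      exact Real.rpow_sub_one_mul_le_young hp (by positivity) (by positivity) hc

lemma continuousOn_cross_term {q : ℝ} {Ω : Set E} {r s : E → ℝ} {a b : E → E} (hp : 1 < p)
    (hr : ContinuousOn r Ω) (hr_pos : ∀ x ∈ Ω, 0 < r x) (hs : Continuous s)
    (ha : ContinuousOn a Ω) (hb : ContinuousOn b Ω) :
    ContinuousOn (fun x => r x ^ (q + 1) * (|s x| ^ (p - 2) * s x) *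
      (‖a x‖ ^ (p - 2) * ⟪a x, b x⟫)) Ω := by
  have hs' : Continuous fun x => |s x| ^ (p - 2) * s x :=
    (continuous_norm_rpow_sub_two_smul (E := ℝ) hp).comp hs
  have hab : ContinuousOn (fun x => ⟪‖a x‖ ^ (p - 2) • a x, b x⟫) Ω :=
    ((continuous_norm_rpow_sub_two_smul hp).comp_continuousOn ha).inner hb
  simp only [real_inner_smul_left] at hab
  exact ((hr.rpow_const fun x hx => Or.inl (hr_pos x hx).ne').mul hs'.continuousOn).mul hab

variable [CompleteSpace E]

lemma gradient_of_notMem_tsupport {f : E → ℝ} {x : E} (hx : x ∉ tsupport f) :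
    gradient f x = 0 := by
  simp [gradient, fderiv_of_notMem_tsupport ℝ hx]

lemma ContDiffOn.continuousOn_gradient {f : E → ℝ} {s : Set E} (hf : ContDiffOn ℝ 1 f s)
    (hs : IsOpen s) : ContinuousOn (gradient f) s :=
  (InnerProductSpace.toDual ℝ E).symm.continuous.comp_continuousOn
    (hf.continuousOn_fderiv_of_isOpen hs le_rfl)

lemma hasGradientAt_rpow_mul_abs_rpow {ρ u : E → ℝ} {x : E} {q : ℝ} (hp : 1 < p)
    (hρ : DifferentiableAt ℝ ρ x) (hρx : ρ x ≠ 0) (hu : DifferentiableAt ℝ u x) :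
    HasGradientAt (fun y => ρ y ^ (q + 1) * |u y| ^ p)
      (((q + 1) * ρ x ^ q * |u x| ^ p) • gradient ρ x +
        (p * ρ x ^ (q + 1) * (|u x| ^ (p - 2) * u x)) • gradient u x) x := by
  have hρq : HasFDerivAt (fun y => ρ y ^ (q + 1)) (((q + 1) * ρ x ^ q) • fderiv ℝ ρ x) x := by
    simpa [Function.comp_def] using
      (Real.hasDerivAt_rpow_const (p := q + 1) (Or.inl hρx)).comp_hasFDerivAt x hρ.hasFDerivAt
  have hup : HasFDerivAt (fun y => |u y| ^ p) ((p * |u x| ^ (p - 2) * u x) • fderiv ℝ u x) x :=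
    (hasDerivAt_abs_rpow (u x) hp).comp_hasFDerivAt x hu.hasFDerivAt
  rw [hasGradientAt_iff_hasFDerivAt, map_add, map_smul, map_smul, toDual_gradient, toDual_gradient]
  refine (hρq.mul hup).congr_fderiv ?_
  module

end InnerProductSpace

section Caccioppoli

variable {E : Type*} [NormedAddCommGroup E] [InnerProductSpace ℝ E] [CompleteSpace E]
  [MeasurableSpace E] [BorelSpace E] {μ : Measure E} {Ω : Set E} {ρ u : E → ℝ} {p q : ℝ}

variable (μ) in
def IsWeaklyPSubharmonicOn (p : ℝ) (ρ : E → ℝ) (Ω : Set E) : Prop :=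
  ∀ φ : E → ℝ, ContDiff ℝ 1 φ → HasCompactSupport φ → tsupport φ ⊆ Ω → (∀ x, 0 ≤ φ x) →
    ∫ x in Ω, ‖gradient ρ x‖ ^ (p - 2) * ⟪gradient ρ x, gradient φ x⟫ ∂μ ≤ 0

lemma IsWeaklyPSubharmonicOn.add_integral_le_zero (hsub : IsWeaklyPSubharmonicOn μ p ρ Ω)
    (hp : 1 < p) (hΩ : IsOpen Ω) (hρ : ContDiffOn ℝ 1 ρ Ω) (hρ_pos : ∀ x ∈ Ω, 0 < ρ x)
    (hu : ContDiff ℝ 1 u) (hu_supp : HasCompactSupport u) (hu_sub : tsupport u ⊆ Ω)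
    (hf : IntegrableOn (fun x => ρ x ^ q * ‖gradient ρ x‖ ^ p * |u x| ^ p) Ω μ)
    (hg : IntegrableOn (fun x => ρ x ^ (q + 1) * (|u x| ^ (p - 2) * u x) *
      (‖gradient ρ x‖ ^ (p - 2) * ⟪gradient ρ x, gradient u x⟫)) Ω μ) :
    (q + 1) * ∫ x in Ω, ρ x ^ q * ‖gradient ρ x‖ ^ p * |u x| ^ p ∂μ +
      p * ∫ x in Ω, ρ x ^ (q + 1) * (|u x| ^ (p - 2) * u x) *
        (‖gradient ρ x‖ ^ (p - 2) * ⟪gradient ρ x, gradient u x⟫) ∂μ ≤ 0 := by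
  have hp0 : p ≠ 0 := by positivity
  set φ := fun x => ρ x ^ (q + 1) * |u x| ^ p
  have hφu : tsupport φ ⊆ tsupport u :=
    tsupport_mul_subset_right.trans <|
      tsupport_comp_subset (g := fun t : ℝ => |t| ^ p) (by simp [Real.zero_rpow hp0]) u
  have hφ : ContDiff ℝ 1 φ :=
    ((hρ.rpow_const_of_ne fun x hx => (hρ_pos x hx).ne').mul
      (hu.norm_rpow hp).contDiffOn).contDiff_of_tsupport_subset hΩ (hφu.trans hu_sub)
  have hφ_nonneg : ∀ x, 0 ≤ φ x := by
    intro x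
    by_cases hx : x ∈ Ω
    · exact mul_nonneg (Real.rpow_nonneg (hρ_pos x hx).le _) (by positivity)
    · simp [φ, image_eq_zero_of_notMem_tsupport fun h => hx (hu_sub h), Real.zero_rpow hp0]
  have hidentity : ∀ x ∈ Ω, ‖gradient ρ x‖ ^ (p - 2) * ⟪gradient ρ x, gradient φ x⟫ =
      (q + 1) * (ρ x ^ q * ‖gradient ρ x‖ ^ p * |u x| ^ p) + p * (ρ x ^ (q + 1) *
        (|u x| ^ (p - 2) * u x) * (‖gradient ρ x‖ ^ (p - 2) * ⟪gradient ρ x, gradient u x⟫)) := by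
    intro x hx
    rw [(hasGradientAt_rpow_mul_abs_rpow hp ((hρ.contDiffAt (hΩ.mem_nhds hx)).differentiableAt
      one_ne_zero) (hρ_pos x hx).ne' (hu.differentiable one_ne_zero x)).gradient,
      inner_add_right, real_inner_smul_right, real_inner_smul_right, real_inner_self_eq_norm_sq]
    linear_combination (q + 1) * ρ x ^ q * |u x| ^ p *
      Real.rpow_sub_two_mul_sq hp (norm_nonneg (gradient ρ x))
  have := hsub φ hφ (hu_supp.of_isClosed_subset (isClosed_tsupport φ) hφu) (hφu.trans hu_sub)
    hφ_nonneg
  rwa [setIntegral_congr_fun hΩ.measurableSet hidentity, integral_add (hf.const_mul _)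
    (hg.const_mul _), integral_const_mul, integral_const_mul] at this

theorem IsWeaklyPSubharmonicOn.caccioppoli [IsFiniteMeasureOnCompacts μ]
    (hsub : IsWeaklyPSubharmonicOn μ p ρ Ω) (hp : 1 < p) (hq : -1 < q) (hΩ : IsOpen Ω)
    (hρ : ContDiffOn ℝ 1 ρ Ω) (hρ_pos : ∀ x ∈ Ω, 0 < ρ x) (hu : ContDiff ℝ 1 u)
    (hu_supp : HasCompactSupport u) (hu_sub : tsupport u ⊆ Ω) :
    ((q + 1) / p) ^ p * ∫ x in Ω, ρ x ^ q * ‖gradient ρ x‖ ^ p * |u x| ^ p ∂μ ≤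
      ∫ x in Ω, ρ x ^ (p + q) * ‖gradient u x‖ ^ p ∂μ := by
  have hp0 : p ≠ 0 := by positivity
  have hc : 0 < (q + 1) / p := div_pos (by linarith) (by linarith)
  have hu0 : ∀ x ∉ tsupport u, u x = 0 := fun x => image_eq_zero_of_notMem_tsupport
  have hgu0 : ∀ x ∉ tsupport u, gradient u x = 0 := fun x => gradient_of_notMem_tsupport
  have hcρ (r : ℝ) : ContinuousOn (fun x => ρ x ^ r) Ω :=
    hρ.continuousOn.rpow_const fun x hx => Or.inl (hρ_pos x hx).ne'
  have hcgρ := hρ.continuousOn_gradient hΩ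
  have hcgu : ContinuousOn (gradient u) Ω :=
    (hu.contDiffOn.continuousOn_gradient isOpen_univ).mono (subset_univ Ω)
  have hint : ∀ w : E → ℝ, ContinuousOn w Ω → (∀ x ∉ tsupport u, w x = 0) →
      IntegrableOn w Ω μ := fun w hw hw0 =>
    (hw.integrable_of_eq_zero_off hΩ hu_supp hu_sub hw0).integrableOn
  have hf : IntegrableOn (fun x => ρ x ^ q * ‖gradient ρ x‖ ^ p * |u x| ^ p) Ω μ :=
    hint _ ((hcρ q |>.mul (hcgρ.norm.rpow_const fun _ _ => Or.inr (by linarith))).mul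
      (hu.continuous.abs.rpow_const fun _ => Or.inr (by linarith)).continuousOn)
      fun x hx => by simp [hu0 x hx, Real.zero_rpow hp0]
  have hh : IntegrableOn (fun x => ρ x ^ (p + q) * ‖gradient u x‖ ^ p) Ω μ :=
    hint _ (hcρ (p + q) |>.mul (hcgu.norm.rpow_const
      fun _ _ => Or.inr (by linarith))) fun x hx => by simp [hgu0 x hx, Real.zero_rpow hp0]
  have hg := hint _ (continuousOn_cross_term (q := q) hp hρ.continuousOn hρ_pos hu.continuous
    hcgρ hcgu) fun x hx => by simp [hu0 x hx, hgu0 x hx]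
  have hyoung := setIntegral_mono_on hg.neg ((hf.const_mul _).add (hh.const_mul _))
    hΩ.measurableSet fun x hx =>
      neg_cross_term_le_young hp hc (hρ_pos x hx) (u x) (gradient ρ x) (gradient u x)
  simp only [Pi.neg_apply, Pi.add_apply] at hyoung
  rw [integral_neg, integral_add (hf.const_mul _) (hh.const_mul _), integral_const_mul,
    integral_const_mul] at hyoung
  refine Real.rpow_mul_le_of_le_young hp hc ?_ hyoung
  rw [mul_div_cancel₀ _ hp0]
  exact hsub.add_integral_le_zero hp hΩ hρ hρ_pos hu hu_supp hu_sub hf hg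

end Caccioppoli

theorem stmt3_general {N : ℕ} (p : ℝ) (hp : 1 < p) (q : ℝ) (hq : -1 < q)
    (Ω : Set (EuclideanSpace ℝ (Fin N))) (hΩ : IsOpen Ω)
    (ρ : EuclideanSpace ℝ (Fin N) → ℝ)
    (hρ : ContDiffOn ℝ 1 ρ Ω)
    (hρ_pos : ∀ x ∈ Ω, 0 < ρ x)
    (hρ_sh : ∀ φ : EuclideanSpace ℝ (Fin N) → ℝ,
      ContDiff ℝ 1 φ → HasCompactSupport φ → tsupport φ ⊆ Ω → (∀ x, 0 ≤ φ x) →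
      ∫ x in Ω, ‖gradient ρ x‖ ^ (p - 2) * ⟪gradient ρ x, gradient φ x⟫ ≤ 0)
    (u : EuclideanSpace ℝ (Fin N) → ℝ)
    (hu : ContDiff ℝ (⊤ : ℕ∞) u) (hu_supp : HasCompactSupport u)
    (hu_sub : tsupport u ⊆ Ω) :
    ((q + 1) / p) ^ p * ∫ x in Ω, ρ x ^ q * ‖gradient ρ x‖ ^ p * |u x| ^ p ≤
      ∫ x in Ω, ρ x ^ (p + q) * ‖gradient u x‖ ^ p :=
  IsWeaklyPSubharmonicOn.caccioppoli hρ_sh hp hq hΩ hρ hρ_pos (hu.of_le (by simp)) hu_supp hu_sub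

theorem stmt3 {N : ℕ} (hN : 1 ≤ N) (p : ℝ) (hp : 1 < p) (q : ℝ) (hq : -1 < q)
    (Ω : Set (EuclideanSpace ℝ (Fin N))) (hΩ : IsOpen Ω)
    (ρ : EuclideanSpace ℝ (Fin N) → ℝ)
    (hρ : ContDiffOn ℝ 1 ρ Ω)
    (hρ_pos : ∀ x ∈ Ω, 0 < ρ x)
    (hρ_sh : ∀ φ : EuclideanSpace ℝ (Fin N) → ℝ,
      ContDiff ℝ 1 φ → HasCompactSupport φ → tsupport φ ⊆ Ω → (∀ x, 0 ≤ φ x) →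
      ∫ x in Ω, ‖gradient ρ x‖ ^ (p - 2) * ⟪gradient ρ x, gradient φ x⟫ ≤ 0)
    (hρq : LocallyIntegrableOn (fun x => ρ x ^ q * ‖gradient ρ x‖ ^ p) Ω)
    (hρpq : LocallyIntegrableOn (fun x => ρ x ^ (p + q)) Ω)
    (u : EuclideanSpace ℝ (Fin N) → ℝ)
    (hu : ContDiff ℝ (⊤ : ℕ∞) u) (hu_supp : HasCompactSupport u)
    (hu_sub : tsupport u ⊆ Ω) :
    ((q + 1) / p) ^ p * ∫ x in Ω, ρ x ^ q * ‖gradient ρ x‖ ^ p * |u x| ^ p ≤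
      ∫ x in Ω, ρ x ^ (p + q) * ‖gradient u x‖ ^ p :=
  stmt3_general p hp q hq Ω hΩ ρ hρ hρ_pos hρ_sh u hu hu_supp hu_sub
end

section
/- Let N ≥ 2 and 1 < p < N, let δ > 0, set p' = p/(p−1) and s = p − 1 + δ/p. Then for every u ∈ C_c^∞(ℝ^N ∖ {0}): ∫ |u(x)|^s / |x|^{p−1} dx ≤ (p/(N−p))^{p−1} (∫ |∇u|^p dx)^{1/p'} (∫ |u|^δ dx)^{1/p}. -/
/-!
Hardy's inequality `∫ (|u|/|x|)^p ≤ (p/(N-p))^p ∫ |∇u|^p` comes from integrating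
`div (x Φ) = N Φ + ∇Φ · x` for `Φ = |u|^p |x|^(-p)`: since `x · ∇|x|^(-p) = -p |x|^(-p)`, this gives
`(N - p) ∫ Φ = -∫ ∇(|u|^p) · x |x|^(-p) ≤ p ∫ (|u|/|x|)^(p-1) |∇u|`, and Hölder's inequality bounds
the right-hand side by `p (∫ Φ)^(1/p') (∫ |∇u|^p)^(1/p)`, whose first factor is then absorbed.
The theorem follows by applying Hölder's inequality with exponents `p'`, `p` to
`|u|^s / |x|^(p-1) = (|u|/|x|)^(p-1) · |u|^(δ/p)` and then Hardy's inequality.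
-/

open MeasureTheory Filter Module

theorem contDiff_of_tsupport {E F : Type*} [NormedAddCommGroup E] [NormedSpace ℝ E]
    [NormedAddCommGroup F] [NormedSpace ℝ F] {n : WithTop ℕ∞} {f : E → F}
    (hf : ∀ x ∈ tsupport f, ContDiffAt ℝ n f x) : ContDiff ℝ n f := by
  refine contDiff_iff_contDiffAt.2 fun x => ?_
  by_cases hx : x ∈ tsupport f
  · exact hf x hx
  · exact contDiffAt_const.congr_of_eventuallyEq (notMem_tsupport_iff_eventuallyEq.1 hx)

theorem integral_fderiv_apply_self_eq_neg_finrank_mul_integral {E : Type*}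
    [NormedAddCommGroup E] [NormedSpace ℝ E] [FiniteDimensional ℝ E] [MeasurableSpace E]
    [BorelSpace E] (μ : Measure E) [μ.IsAddHaarMeasure] {f : E → ℝ} (hf : ContDiff ℝ 1 f)
    (hfs : HasCompactSupport f) :
    ∫ x, fderiv ℝ f x x ∂μ = -(finrank ℝ E) * ∫ x, f x ∂μ := by
  let b := Module.finBasis ℝ E
  let c : Fin (finrank ℝ E) → E →L[ℝ] ℝ := fun i => LinearMap.toContinuousLinearMap (b.coord i)
  have hf' : Continuous (fderiv ℝ f) := hf.continuous_fderiv one_ne_zero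
  have hint : ∀ i, Integrable (fun x => fderiv ℝ f x (b i) * c i x) μ := fun i =>
    ((hf'.clm_apply continuous_const).mul (c i).continuous).integrable_of_hasCompactSupport
      (hfs.fderiv_apply (𝕜 := ℝ) (b i)).mul_right
  -- integration by parts against the `i`-th coordinate function, whose derivative along `b i` is 1
  have hc : ∀ i, c i (b i) = 1 := fun i => by simp [c]
  have hparts : ∀ i, ∫ x, fderiv ℝ f x (b i) * c i x ∂μ = -∫ x, f x ∂μ := by
    intro i
    have h := integral_mul_fderiv_eq_neg_fderiv_mul_of_integrable (μ := μ) (v := b i) (hint i)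
      (by simpa only [(c i).fderiv, hc, mul_one] using
        hf.continuous.integrable_of_hasCompactSupport hfs)
      ((hf.continuous.mul (c i).continuous).integrable_of_hasCompactSupport hfs.mul_right)
      (fun x _ => hf.differentiable one_ne_zero x) (fun x _ => (c i).differentiableAt)
    simp only [(c i).fderiv, hc, mul_one] at h
    linarith
  have hsum : ∀ x, fderiv ℝ f x x = ∑ i, fderiv ℝ f x (b i) * c i x := by
    intro x
    nth_rw 2 [← b.sum_repr x]
    simp only [map_sum, map_smul, smul_eq_mul, c, LinearMap.coe_toContinuousLinearMap',
      Basis.coord_apply, mul_comm]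
  simp_rw [hsum]
  rw [integral_finsetSum _ fun i _ => hint i]
  simp [hparts]

theorem le_div_rpow_mul_of_mul_le_mul_rpow_mul_rpow {p q a b A B : ℝ}
    (hpq : p.HolderConjugate q) (ha : 0 < a) (hb : 0 ≤ b) (hA : 0 ≤ A) (hB : 0 ≤ B)
    (h : a * A ≤ b * (A ^ (1 / q) * B ^ (1 / p))) : A ≤ (b / a) ^ p * B := by
  rcases hA.eq_or_lt with rfl | hA
  · positivity
  have hp := hpq.pos
  have hsplit : A = A ^ (1 / q) * A ^ (1 / p) := by
    rw [← Real.rpow_add hA, add_comm, hpq.one_div_add_one_div, div_one, Real.rpow_one]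
  have hroot : A ^ (1 / p) ≤ b / a * B ^ (1 / p) := by
    have : A ^ (1 / q) * (a * A ^ (1 / p)) ≤ A ^ (1 / q) * (b * B ^ (1 / p)) := by
      rw [mul_left_comm, ← hsplit]
      linarith
    rw [div_mul_eq_mul_div, le_div_iff₀ ha]
    linarith [le_of_mul_le_mul_left this (by positivity)]
  calc A = (A ^ (1 / p)) ^ p := by
        rw [← Real.rpow_mul hA.le, one_div_mul_cancel hp.ne', Real.rpow_one]
    _ ≤ (b / a * B ^ (1 / p)) ^ p := by gcongr
    _ = (b / a) ^ p * B := by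
      rw [Real.mul_rpow (by positivity) (by positivity), ← Real.rpow_mul hB,
        one_div_mul_cancel hp.ne', Real.rpow_one]

theorem integral_rpow_sub_one_mul_le {α : Type*} [MeasurableSpace α] {μ : Measure α} {p q : ℝ}
    (hpq : p.HolderConjugate q) {w g : α → ℝ} (hw : 0 ≤ w) (hg : 0 ≤ g)
    (hwq : MemLp (fun x => w x ^ (p - 1)) (ENNReal.ofReal q) μ)
    (hgp : MemLp g (ENNReal.ofReal p) μ) :
    ∫ x, w x ^ (p - 1) * g x ∂μ ≤ (∫ x, w x ^ p ∂μ) ^ (1 / q) * (∫ x, g x ^ p ∂μ) ^ (1 / p) := by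
  have h := integral_mul_le_Lp_mul_Lq_of_nonneg hpq.symm
    (Eventually.of_forall fun x => Real.rpow_nonneg (hw x) _) (Eventually.of_forall hg) hwq hgp
  simp_rw [← Real.rpow_mul (hw _), hpq.sub_one_mul_conj] at h
  exact h

section NormedSpace

variable {E : Type*} [NormedAddCommGroup E]

theorem continuous_abs_div_norm {u : E → ℝ} (hu : Continuous u) (h0 : (0 : E) ∉ tsupport u) :
    Continuous fun x => |u x| / ‖x‖ := by
  refine continuous_of_tsupport fun x hx => ?_
  have hx0 : x ≠ 0 := by
    rintro rfl
    refine h0 (closure_mono (Function.support_subset_iff'.2 fun y hy => ?_) hx)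
    simp [Function.notMem_support.1 hy]
  exact hu.abs.continuousAt.div continuous_norm.continuousAt (norm_ne_zero_iff.2 hx0)

theorem HasCompactSupport.abs_div_norm {u : E → ℝ} (hus : HasCompactSupport u) :
    HasCompactSupport fun x => |u x| / ‖x‖ :=
  hus.mono (Function.support_subset_iff'.2 fun x hx => by simp [Function.notMem_support.1 hx])

variable [MeasurableSpace E] [OpensMeasurableSpace E] {μ : Measure E}
  [IsFiniteMeasureOnCompacts μ]

theorem integral_abs_rpow_div_norm_rpow_le {p q δ : ℝ} (hpq : p.HolderConjugate q) (hδ : 0 < δ)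
    {u : E → ℝ} (hu : Continuous u) (hus : HasCompactSupport u) (h0 : (0 : E) ∉ tsupport u) :
    ∫ x, |u x| ^ (p - 1 + δ / p) / ‖x‖ ^ (p - 1) ∂μ ≤
      (∫ x, (|u x| / ‖x‖) ^ p ∂μ) ^ (1 / q) * (∫ x, |u x| ^ δ ∂μ) ^ (1 / p) := by
  have hp := hpq.pos
  have hp1 := hpq.sub_one_pos
  have hw : Continuous fun x => |u x| / ‖x‖ := continuous_abs_div_norm hu h0
  have hws := hus.abs_div_norm
  have hsplit : ∀ x, |u x| ^ (p - 1 + δ / p) / ‖x‖ ^ (p - 1) =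
      (|u x| / ‖x‖) ^ (p - 1) * |u x| ^ (δ / p) := fun x => by
    rw [Real.div_rpow (abs_nonneg _) (norm_nonneg _), Real.rpow_add' (abs_nonneg _) (by positivity)]
    ring
  have hpow : ∀ x, (|u x| ^ (δ / p)) ^ p = |u x| ^ δ := fun x => by
    rw [← Real.rpow_mul (abs_nonneg _), div_mul_cancel₀ _ hp.ne']
  simp_rw [hsplit, ← hpow]
  refine integral_rpow_sub_one_mul_le hpq (fun x => by positivity) (fun x => by positivity) ?_ ?_
  · exact (hw.rpow_const fun _ => Or.inr hp1.le).memLp_of_hasCompactSupport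
      (hws.comp_left (g := fun t => t ^ (p - 1)) (Real.zero_rpow hp1.ne'))
  · exact (hu.abs.rpow_const fun _ => Or.inr (by positivity)).memLp_of_hasCompactSupport
      (hus.comp_left (g := fun t => |t| ^ (δ / p)) (by simp [Real.zero_rpow, (div_pos hδ hp).ne']))

end NormedSpace

section InnerProductSpace

variable {E : Type*} [NormedAddCommGroup E] [InnerProductSpace ℝ E]

theorem hasFDerivAt_norm_rpow_of_ne_zero (q : ℝ) {x : E} (hx : x ≠ 0) :
    HasFDerivAt (fun y : E => ‖y‖ ^ q) ((q * ‖x‖ ^ (q - 2)) • innerSL ℝ x) x := by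
  apply HasStrictFDerivAt.hasFDerivAt
  convert! (hasStrictFDerivAt_norm_sq x).rpow_const (p := q / 2) (by simp [hx]) using 0
  simp_rw [← Real.rpow_natCast_mul (norm_nonneg _), ← Nat.cast_smul_eq_nsmul ℝ, smul_smul]
  ring_nf

theorem fderiv_mul_norm_rpow_apply_self {v : E → ℝ} {x : E} (hv : DifferentiableAt ℝ v x)
    (hx : x ≠ 0) (q : ℝ) :
    fderiv ℝ (fun y => v y * ‖y‖ ^ q) x x = (fderiv ℝ v x x + q * v x) * ‖x‖ ^ q := by
  have hn := norm_pos_iff.2 hx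
  rw [HasFDerivAt.fderiv (f := fun y => v y * ‖y‖ ^ q)
    (hv.hasFDerivAt.mul (hasFDerivAt_norm_rpow_of_ne_zero q hx))]
  simp only [add_apply, smul_apply, innerSL_apply_apply,
    real_inner_self_eq_norm_sq, smul_eq_mul]
  rw [Real.rpow_sub hn, Real.rpow_two]
  field_simp
  ring

theorem contDiff_norm_rpow_mul_norm_rpow_neg {p : ℝ} (hp : 1 < p) {u : E → ℝ}
    (hu : ContDiff ℝ 1 u) (h0 : (0 : E) ∉ tsupport u) :
    ContDiff ℝ 1 fun y => ‖u y‖ ^ p * ‖y‖ ^ (-p) := by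
  refine contDiff_of_tsupport fun x hx => ?_
  have hx0 : x ≠ 0 := by
    rintro rfl
    refine h0 (closure_mono (Function.support_subset_iff'.2 fun y hy => ?_) hx)
    simp [Function.notMem_support.1 hy, Real.zero_rpow (by linarith : p ≠ 0)]
  exact (hu.norm_rpow hp).contDiffAt.mul
    ((contDiffAt_norm ℝ hx0).rpow_const_of_ne (norm_ne_zero_iff.2 hx0))

theorem neg_fderiv_norm_rpow_mul_apply_self_le {p : ℝ} (hp : 1 < p) {u : E → ℝ}
    (hu : Differentiable ℝ u) (x : E) :
    -(fderiv ℝ (fun y => ‖u y‖ ^ p * ‖y‖ ^ (-p)) x x + p * (‖u x‖ ^ p * ‖x‖ ^ (-p))) ≤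
      p * ((|u x| / ‖x‖) ^ (p - 1) * ‖fderiv ℝ u x‖) := by
  have hp0 : 0 < p := by linarith
  rcases eq_or_ne x 0 with rfl | hx
  · simp only [map_zero, norm_zero, Real.zero_rpow (neg_ne_zero.2 hp0.ne'), mul_zero, add_zero,
      neg_zero]
    positivity
  have hn := norm_pos_iff.2 hx
  have hv := (hu.norm_rpow hp) x
  calc -(fderiv ℝ (fun y => ‖u y‖ ^ p * ‖y‖ ^ (-p)) x x + p * (‖u x‖ ^ p * ‖x‖ ^ (-p)))
      = -fderiv ℝ (fun y => ‖u y‖ ^ p) x x * ‖x‖ ^ (-p) := by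
        rw [fderiv_mul_norm_rpow_apply_self hv hx (-p)]
        ring
    _ ≤ ‖fderiv ℝ (fun y => ‖u y‖ ^ p) x‖ * ‖x‖ * ‖x‖ ^ (-p) := by
        gcongr
        exact (neg_le_abs _).trans ((fderiv ℝ (fun y => ‖u y‖ ^ p) x).le_opNorm x)
    _ ≤ p * ‖u x‖ ^ (p - 1) * ‖fderiv ℝ u x‖ * ‖x‖ * ‖x‖ ^ (-p) := by
        gcongr
        exact norm_fderiv_norm_rpow_le hu hp
    _ = p * ((|u x| / ‖x‖) ^ (p - 1) * ‖fderiv ℝ u x‖) := by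
        rw [Real.rpow_neg hn.le, Real.div_rpow (abs_nonneg _) hn.le, Real.norm_eq_abs,
          Real.rpow_sub_one hn.ne']
        field_simp

variable [FiniteDimensional ℝ E] [MeasurableSpace E] [BorelSpace E] (μ : Measure E)
  [μ.IsAddHaarMeasure]

theorem hardy_inequality {p : ℝ} (hp : 1 < p) (hpE : p < finrank ℝ E) {u : E → ℝ}
    (hu : ContDiff ℝ 1 u) (hus : HasCompactSupport u) (h0 : (0 : E) ∉ tsupport u) :
    ∫ x, (|u x| / ‖x‖) ^ p ∂μ ≤ (p / (finrank ℝ E - p)) ^ p * ∫ x, ‖fderiv ℝ u x‖ ^ p ∂μ := by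
  have hp0 : 0 < p := by linarith
  set Φ : E → ℝ := fun y => ‖u y‖ ^ p * ‖y‖ ^ (-p)
  have hΦ : ContDiff ℝ 1 Φ := contDiff_norm_rpow_mul_norm_rpow_neg hp hu h0
  have hΦs : HasCompactSupport Φ := hus.mono (Function.support_subset_iff'.2 fun x hx => by
    simp [Φ, Function.notMem_support.1 hx, Real.zero_rpow hp0.ne'])
  have hΦw : ∀ x, Φ x = (|u x| / ‖x‖) ^ p := fun x => by
    show ‖u x‖ ^ p * ‖x‖ ^ (-p) = _
    rw [Real.div_rpow (abs_nonneg _) (norm_nonneg _), Real.rpow_neg (norm_nonneg _),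
      Real.norm_eq_abs, div_eq_mul_inv]
  have hΦint : Integrable Φ μ := hΦ.continuous.integrable_of_hasCompactSupport hΦs
  have hΦ'int : Integrable (fun x => fderiv ℝ Φ x x) μ :=
    ((hΦ.continuous_fderiv one_ne_zero).clm_apply continuous_id).integrable_of_hasCompactSupport
      ((hΦs.fderiv (𝕜 := ℝ)).mono (Function.support_subset_iff'.2 fun x hx => by
        simp [Function.notMem_support.1 hx]))
  have hw : Continuous fun x => (|u x| / ‖x‖) ^ (p - 1) :=
    (continuous_abs_div_norm hu.continuous h0).rpow_const fun _ => Or.inr (by linarith)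
  have hws : HasCompactSupport fun x => (|u x| / ‖x‖) ^ (p - 1) :=
    hus.abs_div_norm.comp_left (g := fun t => t ^ (p - 1)) (Real.zero_rpow (by linarith))
  have hdu : Continuous fun x => ‖fderiv ℝ u x‖ := (hu.continuous_fderiv one_ne_zero).norm
  have hdus : HasCompactSupport fun x => ‖fderiv ℝ u x‖ := (hus.fderiv (𝕜 := ℝ)).norm
  have hq := Real.HolderConjugate.conjExponent hp
  refine le_div_rpow_mul_of_mul_le_mul_rpow_mul_rpow hq (sub_pos.2 hpE) hp0.le
    (integral_nonneg fun x => by positivity) (integral_nonneg fun x => by positivity) ?_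
  calc ((finrank ℝ E : ℝ) - p) * ∫ x, (|u x| / ‖x‖) ^ p ∂μ
      = -∫ x, (fderiv ℝ Φ x x + p * Φ x) ∂μ := by
        rw [integral_add hΦ'int (hΦint.const_mul p), integral_const_mul,
          integral_fderiv_apply_self_eq_neg_finrank_mul_integral μ hΦ hΦs]
        simp_rw [hΦw]
        ring
    _ ≤ ∫ x, p * ((|u x| / ‖x‖) ^ (p - 1) * ‖fderiv ℝ u x‖) ∂μ := by
        rw [← integral_neg]
        refine integral_mono (hΦ'int.add (hΦint.const_mul p)).neg ?_
          (neg_fderiv_norm_rpow_mul_apply_self_le hp (hu.differentiable one_ne_zero))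
        exact ((hw.mul hdu).const_mul p).integrable_of_hasCompactSupport hdus.mul_left.mul_left
    _ = p * ∫ x, (|u x| / ‖x‖) ^ (p - 1) * ‖fderiv ℝ u x‖ ∂μ := integral_const_mul _ _
    _ ≤ _ := by
        gcongr
        exact integral_rpow_sub_one_mul_le hq (fun x => by positivity) (fun x => by positivity)
          (hw.memLp_of_hasCompactSupport hws) (hdu.memLp_of_hasCompactSupport hdus)

end InnerProductSpace

theorem stmt6_general {N : ℕ} (p : ℝ) (hp : 1 < p) (hpN : p < N)
    (δ p' s : ℝ) (hδ : 0 < δ) (hp' : p' = p / (p - 1)) (hs : s = p - 1 + δ / p)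
    (u : EuclideanSpace ℝ (Fin N) → ℝ)
    (hu : ContDiff ℝ (⊤ : ℕ∞) u) (hu_supp : HasCompactSupport u)
    (hu_sub : tsupport u ⊆ {(0 : EuclideanSpace ℝ (Fin N))}ᶜ) :
    ∫ x, |u x| ^ s / ‖x‖ ^ (p - 1) ≤
      (p / (N - p)) ^ (p - 1) *
        (∫ x, ‖gradient u x‖ ^ p) ^ (1 / p') *
        (∫ x, |u x| ^ δ) ^ (1 / p) := by
  have hpq : p.HolderConjugate p' := (Real.holderConjugate_iff_eq_conjExponent hp).2 hp'
  have h0 : (0 : EuclideanSpace ℝ (Fin N)) ∉ tsupport u := fun h => hu_sub h rfl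
  have hhardy := hardy_inequality volume hp (by simpa using hpN) (hu.of_le (by simp)) hu_supp h0
  rw [finrank_euclideanSpace_fin] at hhardy
  have hgrad : ∀ x, ‖gradient u x‖ = ‖fderiv ℝ u x‖ := fun x =>
    (InnerProductSpace.toDual ℝ _).symm.norm_map _
  subst hs
  calc _ ≤ (∫ x, (|u x| / ‖x‖) ^ p) ^ (1 / p') * (∫ x, |u x| ^ δ) ^ (1 / p) :=
        integral_abs_rpow_div_norm_rpow_le hpq hδ hu.continuous hu_supp h0
    _ ≤ ((p / (N - p)) ^ p * ∫ x, ‖fderiv ℝ u x‖ ^ p) ^ (1 / p') * (∫ x, |u x| ^ δ) ^ (1 / p) := by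
        gcongr
        exact hpq.symm.one_div_nonneg
    _ = _ := by
        rw [Real.mul_rpow (by positivity) (integral_nonneg fun x => by positivity),
          ← Real.rpow_mul (by positivity), mul_one_div, hpq.div_conj_eq_sub_one]
        simp_rw [hgrad]

theorem stmt6 {N : ℕ} (hN : 2 ≤ N) (p : ℝ) (hp : 1 < p) (hpN : p < N)
    (δ p' s : ℝ) (hδ : 0 < δ) (hp' : p' = p / (p - 1)) (hs : s = p - 1 + δ / p)
    (u : EuclideanSpace ℝ (Fin N) → ℝ)
    (hu : ContDiff ℝ (⊤ : ℕ∞) u) (hu_supp : HasCompactSupport u)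
    (hu_sub : tsupport u ⊆ {(0 : EuclideanSpace ℝ (Fin N))}ᶜ) :
    ∫ x, |u x| ^ s / ‖x‖ ^ (p - 1) ≤
      (p / (N - p)) ^ (p - 1) *
        (∫ x, ‖gradient u x‖ ^ p) ^ (1 / p') *
        (∫ x, |u x| ^ δ) ^ (1 / p) :=
  stmt6_general p hp hpN δ p' s hδ hp' hs u hu hu_supp hu_sub
end

section
/- Let N ≥ 2, p > 1, α ∈ ℝ, and let ℝ^N₊ = {x = (x₁, …, x_N) ∈ ℝ^N : x₁ > 0} be the open half-space, so that the distance of x ∈ ℝ^N₊ from the boundary is x₁. Then for every u ∈ C_c^∞(ℝ^N₊): (|p−1−α|/p)^p ∫_{ℝ^N₊} x₁^{α−p} |u(x)|^p dx ≤ ∫_{ℝ^N₊} x₁^α |∇u(x)|^p dx. -/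
/-!
Write `c = α - p + 1` and `d x = x₁`. The integral of `∂₁ (d ^ c * |u| ^ p)` over the half-space
vanishes, so `c ∫ d ^ (α - p) |u| ^ p = -p ∫ d ^ c |u| ^ (p - 2) u ∂₁u`. Splitting
`d ^ c = d ^ (α / p) * d ^ ((α - p) / q)` with `q = p / (p - 1)` and applying Hölder bounds the
right side by `p (∫ d ^ α |∂₁u| ^ p) ^ (1 / p) (∫ d ^ (α - p) |u| ^ p) ^ (1 / q)`; dividing by the
last factor and raising to the power `p` gives the inequality, since `|∂₁u| ≤ |∇u|`.
-/

open MeasureTheory Real Set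
open scoped ENNReal

section CompactSupport

variable {X : Type*} [TopologicalSpace X] [T2Space X] [MeasurableSpace X] [OpensMeasurableSpace X]
  {μ : Measure X} [IsFiniteMeasureOnCompacts μ]

theorem MeasureTheory.memLp_rpow_mul_of_eq_zero_off_compact {d g : X → ℝ} {K : Set X}
    (hd : Continuous d) (hg : Continuous g) (hK : IsCompact K) (hKd : K ⊆ {x | 0 < d x})
    (hg0 : ∀ x ∉ K, g x = 0) (r : ℝ) (q : ℝ≥0∞) :
    MemLp (fun x => d x ^ r * g x) q μ := by
  have h0 : ∀ x ∉ K, d x ^ r * g x = 0 := fun x hx => by rw [hg0 x hx, mul_zero]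
  have hcont : ContinuousOn (fun x => d x ^ r * g x) {x | 0 < d x} :=
    (hd.continuousOn.rpow_const fun x hx => Or.inl (ne_of_gt hx)).mul hg.continuousOn
  refine (hcont.continuous_of_tsupport_subset (isOpen_lt continuous_const hd) ?_
    ).memLp_of_hasCompactSupport (HasCompactSupport.intro hK h0)
  exact (closure_minimal (Function.support_subset_iff'.2 h0) hK.isClosed).trans hKd

theorem MeasureTheory.integrable_rpow_mul_of_eq_zero_off_compact {d g : X → ℝ} {K : Set X}
    (hd : Continuous d) (hg : Continuous g) (hK : IsCompact K) (hKd : K ⊆ {x | 0 < d x})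
    (hg0 : ∀ x ∉ K, g x = 0) (r : ℝ) : Integrable (fun x => d x ^ r * g x) μ :=
  memLp_one_iff_integrable.1 (memLp_rpow_mul_of_eq_zero_off_compact hd hg hK hKd hg0 r 1)

end CompactSupport

theorem Real.rpow_mul_le_of_mul_le_rpow_mul_rpow {p q a I K : ℝ} (hpq : p.HolderConjugate q)
    (ha : 0 ≤ a) (hI : 0 ≤ I) (hK : 0 ≤ K) (h : a * I ≤ K ^ (1 / p) * I ^ (1 / q)) :
    a ^ p * I ≤ K := by
  rcases hI.eq_or_lt with rfl | hI
  · simpa using hK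
  have hsplit : I = I ^ (1 / p) * I ^ (1 / q) := by
    rw [← rpow_add hI, one_div, one_div, hpq.inv_add_inv_eq_one, rpow_one]
  have h' : a * I ^ (1 / p) ≤ K ^ (1 / p) := by
    refine le_of_mul_le_mul_right ?_ (rpow_pos_of_pos hI (1 / q))
    rwa [mul_assoc, ← hsplit]
  calc a ^ p * I = (a * I ^ (1 / p)) ^ p := by
        rw [mul_rpow ha (rpow_nonneg hI.le _), ← rpow_mul hI.le, one_div_mul_cancel hpq.ne_zero,
          rpow_one]
    _ ≤ (K ^ (1 / p)) ^ p := rpow_le_rpow (by positivity) h' hpq.nonneg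
    _ = K := by rw [← rpow_mul hK, one_div_mul_cancel hpq.ne_zero, rpow_one]

theorem abs_fderiv_abs_rpow_apply {E : Type*} [NormedAddCommGroup E] [NormedSpace ℝ E]
    {u : E → ℝ} (hu : Differentiable ℝ u) {p : ℝ} (hp : 1 < p) (x v : E) :
    |fderiv ℝ (fun x => |u x| ^ p) x v| = p * |u x| ^ (p - 1) * |fderiv ℝ u x v| := by
  have h := hu.fderiv_norm_rpow (x := x) hp
  simp only [Real.norm_eq_abs] at h
  rw [h]
  simp only [smul_apply, ContinuousLinearMap.comp_apply, coe_innerSL_apply, RCLike.inner_apply,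
    ringHom_apply, smul_eq_mul, abs_mul]
  rw [abs_of_pos (by linarith), abs_of_nonneg (by positivity), show p - 1 = p - 2 + 1 by ring,
    rpow_add_one' (abs_nonneg _) (by linarith)]
  ring

theorem abs_fderiv_apply_le_norm_gradient {F : Type*} [NormedAddCommGroup F]
    [InnerProductSpace ℝ F] [CompleteSpace F] (u : F → ℝ) (x v : F) :
    |fderiv ℝ u x v| ≤ ‖gradient u x‖ * ‖v‖ := by
  rw [gradient, LinearIsometryEquiv.norm_map]
  exact (fderiv ℝ u x).le_opNorm v

section HalfSpace

variable {E : Type*} [NormedAddCommGroup E] [NormedSpace ℝ E] [MeasurableSpace E] [BorelSpace E]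
  {μ : Measure E} {ℓ : E →L[ℝ] ℝ}

theorem integral_rpow_mul_fderiv_apply_eq [FiniteDimensional ℝ E] [μ.IsAddHaarMeasure]
    {g : E → ℝ} (hg : ContDiff ℝ 1 g) (hgc : HasCompactSupport g)
    (hgS : tsupport g ⊆ {x | 0 < ℓ x}) (c : ℝ) (v : E) :
    ∫ x, ℓ x ^ c * fderiv ℝ g x v ∂μ = -(c * ℓ v * ∫ x, ℓ x ^ (c - 1) * g x ∂μ) := by
  have hw : ∀ x ∈ tsupport g, HasFDerivAt (fun x => ℓ x ^ c) ((c * ℓ x ^ (c - 1)) • ℓ) x :=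
    fun x hx => ℓ.hasFDerivAt.rpow_const (Or.inl (ne_of_gt (hgS hx)))
  have hw' : ∀ x, fderiv ℝ (fun x => ℓ x ^ c) x v * g x = c * ℓ v * (ℓ x ^ (c - 1) * g x) := by
    intro x
    by_cases hx : x ∈ tsupport g
    · rw [(hw x hx).fderiv, smul_apply, smul_eq_mul]
      ring
    · simp [image_eq_zero_of_notMem_tsupport hx]
  have integrable : ∀ {h : E → ℝ}, Continuous h → (∀ x ∉ tsupport g, h x = 0) →
      ∀ r : ℝ, Integrable (fun x => ℓ x ^ r * h x) μ := fun hh h0 r =>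
    integrable_rpow_mul_of_eq_zero_off_compact ℓ.continuous hh hgc hgS h0 r
  have hgfun : Integrable (fun x => ℓ x ^ (c - 1) * g x) μ :=
    integrable hg.continuous (fun x => image_eq_zero_of_notMem_tsupport) _
  rw [integral_mul_fderiv_eq_neg_fderiv_mul_of_integrable
    (by simpa only [hw'] using hgfun.const_mul (c * ℓ v))
    (integrable ((hg.continuous_fderiv one_ne_zero).clm_apply continuous_const)
      (fun x hx => by rw [fderiv_of_notMem_tsupport ℝ hx, zero_apply]) c)
    (integrable hg.continuous (fun x => image_eq_zero_of_notMem_tsupport) c)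
    (fun x hx => (hw x hx).differentiableAt) (fun x _ => hg.differentiable one_ne_zero x)]
  simp_rw [hw', integral_const_mul]

theorem setIntegral_rpow_mul_fderiv_abs_rpow_eq [FiniteDimensional ℝ E] [μ.IsAddHaarMeasure]
    {p : ℝ} (hp : 1 < p) {u : E → ℝ} (hu : ContDiff ℝ 1 u) (hc : HasCompactSupport u)
    (hS : tsupport u ⊆ {x | 0 < ℓ x}) {v : E} (hv : ℓ v = 1) (c : ℝ) :
    ∫ x in {x | 0 < ℓ x}, ℓ x ^ c * fderiv ℝ (fun x => |u x| ^ p) x v ∂μ =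
      -(c * ∫ x in {x | 0 < ℓ x}, ℓ x ^ (c - 1) * |u x| ^ p ∂μ) := by
  have h0 : (fun t : ℝ => |t| ^ p) 0 = 0 := by simp [zero_rpow (by linarith : p ≠ 0)]
  have hg : ContDiff ℝ 1 fun x => |u x| ^ p := by
    simpa only [Real.norm_eq_abs] using hu.norm_rpow hp
  have hgS : tsupport (fun x => |u x| ^ p) ⊆ {x | 0 < ℓ x} :=
    (tsupport_comp_subset (g := fun t : ℝ => |t| ^ p) h0 u).trans hS
  rw [setIntegral_eq_integral_of_forall_compl_eq_zero fun x hx => ?_,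
    setIntegral_eq_integral_of_forall_compl_eq_zero fun x hx => ?_,
    integral_rpow_mul_fderiv_apply_eq hg (hc.comp_left (g := fun t : ℝ => |t| ^ p) h0) hgS c v,
    hv, mul_one]
  · exact mul_eq_zero_of_right _ (image_eq_zero_of_notMem_tsupport (f := fun x => |u x| ^ p)
      fun h => hx (hgS h))
  · rw [fderiv_of_notMem_tsupport ℝ fun h => hx (hgS h), zero_apply, mul_zero]

theorem setIntegral_abs_rpow_mul_fderiv_abs_rpow_le [IsFiniteMeasureOnCompacts μ] {p : ℝ}
    (hp : 1 < p) (α : ℝ) {u : E → ℝ} (hu : ContDiff ℝ 1 u) (hc : HasCompactSupport u)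
    (hS : tsupport u ⊆ {x | 0 < ℓ x}) (v : E) :
    ∫ x in {x | 0 < ℓ x}, |ℓ x ^ (α - p + 1) * fderiv ℝ (fun x => |u x| ^ p) x v| ∂μ ≤
      p * (∫ x in {x | 0 < ℓ x}, ℓ x ^ α * |fderiv ℝ u x v| ^ p ∂μ) ^ (1 / p) *
        (∫ x in {x | 0 < ℓ x}, ℓ x ^ (α - p) * |u x| ^ p ∂μ) ^ (1 / p.conjExponent) := by
  set S := {x | 0 < ℓ x}
  set q := p.conjExponent
  have hpq : p.HolderConjugate q := .conjExponent hp
  have hS_meas : MeasurableSet S := measurableSet_lt measurable_const ℓ.measurable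
  set A := fun x => ℓ x ^ ((α - p) / q) * |u x| ^ (p - 1)
  set B := fun x => ℓ x ^ (α / p) * |fderiv ℝ u x v|
  have hAq : ∀ x ∈ S, A x ^ q = ℓ x ^ (α - p) * |u x| ^ p := fun x (hx : 0 < ℓ x) => by
    rw [mul_rpow (by positivity) (by positivity), ← rpow_mul hx.le, ← rpow_mul (abs_nonneg _),
      div_mul_cancel₀ _ hpq.symm.ne_zero, hpq.sub_one_mul_conj]
  have hBp : ∀ x ∈ S, B x ^ p = ℓ x ^ α * |fderiv ℝ u x v| ^ p := fun x (hx : 0 < ℓ x) => by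
    rw [mul_rpow (by positivity) (by positivity), ← rpow_mul hx.le, div_mul_cancel₀ _ hpq.ne_zero]
  have hAB : ∀ x ∈ S,
      |ℓ x ^ (α - p + 1) * fderiv ℝ (fun x => |u x| ^ p) x v| = p * (B x * A x) :=
    fun x (hx : 0 < ℓ x) => by
      have hexp : α - p + 1 = α / p + (α - p) / q := by
        rw [div_eq_mul_inv _ q, ← hpq.one_sub_inv]
        field_simp
        ring
      rw [abs_mul, abs_fderiv_abs_rpow_apply (hu.differentiable one_ne_zero) hp,
        abs_of_pos (by positivity), hexp, rpow_add hx]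
      ring
  have memLp : ∀ {h : E → ℝ}, Continuous h → (∀ x ∉ tsupport u, h x = 0) →
      ∀ (r : ℝ) (s : ℝ≥0∞), MemLp (fun x => ℓ x ^ r * h x) s (μ.restrict S) := fun hh h0 r s =>
    (memLp_rpow_mul_of_eq_zero_off_compact ℓ.continuous hh hc hS h0 r s).restrict S
  have holder := integral_mul_le_Lp_mul_Lq_of_nonneg (f := B) (g := A) hpq
    (ae_restrict_of_forall_mem hS_meas fun x (hx : 0 < ℓ x) => by positivity)
    (ae_restrict_of_forall_mem hS_meas fun x (hx : 0 < ℓ x) => by positivity)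
    (memLp ((hu.continuous_fderiv one_ne_zero).clm_apply continuous_const).abs
      (fun x hx => by simp [fderiv_of_notMem_tsupport ℝ hx]) _ _)
    (memLp (hu.continuous.abs.rpow_const (p := p - 1) fun _ => Or.inr (by linarith))
      (fun x hx => by
        simp [image_eq_zero_of_notMem_tsupport hx, zero_rpow (sub_ne_zero.2 hp.ne')]) _ _)
  rw [setIntegral_congr_fun hS_meas hAB, integral_const_mul, mul_assoc,
    ← setIntegral_congr_fun hS_meas hAq, ← setIntegral_congr_fun hS_meas hBp]
  exact mul_le_mul_of_nonneg_left holder hpq.nonneg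

theorem hardy_halfSpace_fderiv_apply [FiniteDimensional ℝ E] [μ.IsAddHaarMeasure] {p : ℝ}
    (hp : 1 < p) (α : ℝ) {u : E → ℝ} (hu : ContDiff ℝ 1 u) (hc : HasCompactSupport u)
    (hS : tsupport u ⊆ {x | 0 < ℓ x}) {v : E} (hv : ℓ v = 1) :
    (|p - 1 - α| / p) ^ p * ∫ x in {x | 0 < ℓ x}, ℓ x ^ (α - p) * |u x| ^ p ∂μ ≤
      ∫ x in {x | 0 < ℓ x}, ℓ x ^ α * |fderiv ℝ u x v| ^ p ∂μ := by
  have hS_meas : MeasurableSet {x | 0 < ℓ x} := measurableSet_lt measurable_const ℓ.measurable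
  have hp0 : 0 < p := by linarith
  set I := ∫ x in {x | 0 < ℓ x}, ℓ x ^ (α - p) * |u x| ^ p ∂μ
  have hI : 0 ≤ I := setIntegral_nonneg hS_meas fun x (hx : 0 < ℓ x) => by positivity
  have hJ : 0 ≤ ∫ x in {x | 0 < ℓ x}, ℓ x ^ α * |fderiv ℝ u x v| ^ p ∂μ :=
    setIntegral_nonneg hS_meas fun x (hx : 0 < ℓ x) => by positivity
  have ibp := setIntegral_rpow_mul_fderiv_abs_rpow_eq (μ := μ) hp hu hc hS hv (α - p + 1)
  rw [add_sub_cancel_right] at ibp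
  refine rpow_mul_le_of_mul_le_rpow_mul_rpow (.conjExponent hp) (by positivity) hI hJ ?_
  rw [div_mul_eq_mul_div, div_le_iff₀' hp0, ← mul_assoc]
  calc |p - 1 - α| * I
      = |∫ x in {x | 0 < ℓ x}, ℓ x ^ (α - p + 1) * fderiv ℝ (fun x => |u x| ^ p) x v ∂μ| := by
        rw [ibp, abs_neg, abs_mul, abs_of_nonneg hI, show α - p + 1 = -(p - 1 - α) by ring,
          abs_neg]
    _ ≤ ∫ x in {x | 0 < ℓ x}, |ℓ x ^ (α - p + 1) * fderiv ℝ (fun x => |u x| ^ p) x v| ∂μ :=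
        abs_integral_le_integral_abs
    _ ≤ _ := setIntegral_abs_rpow_mul_fderiv_abs_rpow_le hp α hu hc hS v

end HalfSpace

theorem stmt17 {N : ℕ} (hN : 2 ≤ N) (p : ℝ) (hp : 1 < p) (α : ℝ)
    (u : EuclideanSpace ℝ (Fin N) → ℝ)
    (hu : ContDiff ℝ (⊤ : ℕ∞) u) (hu_supp : HasCompactSupport u)
    (hu_sub : tsupport u ⊆ {x : EuclideanSpace ℝ (Fin N) | 0 < x ⟨0, by omega⟩}) :
    (|p - 1 - α| / p) ^ p *
        ∫ x in {x : EuclideanSpace ℝ (Fin N) | 0 < x ⟨0, by omega⟩},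
          (x ⟨0, by omega⟩) ^ (α - p) * |u x| ^ p ≤
      ∫ x in {x : EuclideanSpace ℝ (Fin N) | 0 < x ⟨0, by omega⟩},
        (x ⟨0, by omega⟩) ^ α * ‖gradient u x‖ ^ p := by
  set i : Fin N := ⟨0, by omega⟩
  set S := {x : EuclideanSpace ℝ (Fin N) | 0 < x i}
  have hu1 : ContDiff ℝ 1 u := hu.of_le (by exact_mod_cast le_top)
  have hS_meas : MeasurableSet S := measurableSet_lt measurable_const (by fun_prop)
  refine (hardy_halfSpace_fderiv_apply (μ := volume) (ℓ := EuclideanSpace.proj i) hp α hu1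
    hu_supp hu_sub (v := EuclideanSpace.single i 1) (by simp)).trans
    (integral_mono_of_nonneg ?_ ?_ ?_)
  · exact ae_restrict_of_forall_mem hS_meas fun x (hx : 0 < x i) => by positivity
  · have hgrad : Continuous (gradient u) :=
      (InnerProductSpace.toDual ℝ _).symm.continuous.comp (hu1.continuous_fderiv one_ne_zero)
    refine (integrable_rpow_mul_of_eq_zero_off_compact (EuclideanSpace.proj i).continuous
      (hgrad.norm.rpow_const fun _ => Or.inr (by linarith)) hu_supp hu_sub (fun x hx => ?_)
      α).restrict
    simp [gradient, fderiv_of_notMem_tsupport ℝ hx, zero_rpow (by linarith : p ≠ 0)]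
  · refine ae_restrict_of_forall_mem hS_meas fun x (hx : 0 < x i) => ?_
    have hDu := abs_fderiv_apply_le_norm_gradient u x (EuclideanSpace.single i 1)
    rw [PiLp.norm_single, norm_one, mul_one] at hDu
    exact mul_le_mul_of_nonneg_left (rpow_le_rpow (abs_nonneg _) hDu (by linarith))
      (rpow_nonneg hx.le α)
end

section
/- (Hardy–Poincaré inequality for the hyperbolic plane, Euclidean form.) Let α ∈ ℝ and let ℂ₊ = {(x, y) ∈ ℝ² : y > 0} be the upper half-plane. Then for every u ∈ C_c^∞(ℂ₊): ((1−α)²/4) ∫_{ℂ₊} y^{α−2} u(x,y)² dx dy ≤ ∫_{ℂ₊} y^α |∇u(x,y)|² dx dy. -/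
/-!
On each vertical line the inequality is the one-dimensional weighted Hardy inequality on
`(0, ∞)`: since `t ^ (α - 1) f²` has compact support in `(0, ∞)`, the integral of its derivative
vanishes, which gives `∫ t ^ (α - 1) f f' = (1 - α) / 2 ∫ t ^ (α - 2) f²`; expanding
`0 ≤ ∫ t ^ α (f' + c f / t)²` with `c = (α - 1) / 2` then yields the constant `(1 - α)² / 4`.
Fubini assembles the vertical lines, and `|∂u/∂y| ≤ |∇u|` finishes the proof.
-/

open MeasureTheory Set Filter Topology

lemma Continuous.rpow_mul_of_tsupport_subset {X : Type*} [TopologicalSpace X] {φ v : X → ℝ}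
    (hφ : Continuous φ) (hv : Continuous v) (hsupp : tsupport v ⊆ {x | 0 < φ x}) (p : ℝ) :
    Continuous fun x => φ x ^ p * v x :=
  ((hφ.continuousOn.rpow_const fun _ hx => Or.inl (ne_of_gt hx)).mul hv.continuousOn)
    |>.continuous_of_tsupport_subset (isOpen_lt continuous_const hφ)
    (tsupport_mul_subset_right.trans hsupp)

lemma integrable_rpow_mul_of_support_subset {X : Type*} [TopologicalSpace X] [T2Space X]
    [MeasurableSpace X] [OpensMeasurableSpace X] {μ : Measure X} [IsFiniteMeasureOnCompacts μ]
    {φ v : X → ℝ} {K : Set X} (hK : IsCompact K) (hKφ : K ⊆ {x | 0 < φ x}) (hφ : Continuous φ)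
    (hv : Continuous v) (hvK : Function.support v ⊆ K) (p : ℝ) :
    Integrable (fun x => φ x ^ p * v x) μ :=
  (hφ.rpow_mul_of_tsupport_subset hv ((closure_minimal hvK hK.isClosed).trans hKφ) p)
    |>.integrable_of_hasCompactSupport (HasCompactSupport.intro' hK hK.isClosed
      fun _ hx => Function.notMem_support.mp (mt (@hvK _) hx)).mul_left

lemma hasDerivAt_rpow_mul_sq {f : ℝ → ℝ} (hf : Differentiable ℝ f) (hf0 : tsupport f ⊆ Ioi 0)
    (α t : ℝ) :
    HasDerivAt (fun s => s ^ (α - 1) * f s ^ 2)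
      ((α - 1) * (t ^ (α - 2) * f t ^ 2) + 2 * (t ^ (α - 1) * (f t * deriv f t))) t := by
  by_cases ht : t ∈ tsupport f
  · refine ((Real.hasDerivAt_rpow_const (Or.inl (ne_of_gt (hf0 ht)))).mul
      ((hf t).hasDerivAt.pow 2)).congr_deriv ?_
    rw [show α - 1 - 1 = α - 2 by ring]
    simp only [Pi.pow_apply]
    push_cast
    ring
  · have hev : f =ᶠ[𝓝 t] 0 := notMem_tsupport_iff_eventuallyEq.mp ht
    have hdf : deriv f t = 0 := by rw [hev.deriv_eq]; exact deriv_const t 0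
    have hft : f t = 0 := hev.eq_of_nhds
    rw [hft, hdf]
    refine (hasDerivAt_const t (0 : ℝ)).congr_of_eventuallyEq ?_ |>.congr_deriv (by ring)
    filter_upwards [hev] with s hs
    simp [hs]

lemma rpow_completed_square_nonneg {t : ℝ} (ht : 0 < t) (α c y z : ℝ) :
    0 ≤ t ^ α * z ^ 2 + 2 * c * (t ^ (α - 1) * (y * z)) + c ^ 2 * (t ^ (α - 2) * y ^ 2) := by
  have hsq : t ^ α * z ^ 2 + 2 * c * (t ^ (α - 1) * (y * z)) + c ^ 2 * (t ^ (α - 2) * y ^ 2)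
      = t ^ α * (z + c * y / t) ^ 2 := by
    rw [Real.rpow_sub ht, Real.rpow_sub ht, Real.rpow_one, Real.rpow_two]
    field_simp
    ring
  rw [hsq]
  exact mul_nonneg (Real.rpow_nonneg ht.le α) (sq_nonneg _)

theorem hardy_inequality_Ioi (α : ℝ) {f : ℝ → ℝ} (hf : ContDiff ℝ 1 f)
    (hfc : HasCompactSupport f) (hf0 : tsupport f ⊆ Ioi 0) :
    (1 - α) ^ 2 / 4 * ∫ t, t ^ (α - 2) * f t ^ 2 ≤ ∫ t, t ^ α * deriv f t ^ 2 := by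
  have hdf : Continuous (deriv f) := hf.continuous_deriv le_rfl
  have hvanish (t : ℝ) (ht : t ∉ tsupport f) : f t = 0 ∧ deriv f t = 0 :=
    ⟨image_eq_zero_of_notMem_tsupport ht,
      image_eq_zero_of_notMem_tsupport (mt (fun h => tsupport_deriv_subset h) ht)⟩
  have hint (p : ℝ) (v : ℝ → ℝ) (hv : Continuous v)
      (hv0 : ∀ t, f t = 0 → deriv f t = 0 → v t = 0) : Integrable fun t => t ^ p * v t :=
    integrable_rpow_mul_of_support_subset hfc hf0 continuous_id hv
      (fun t ht => by_contra fun h => ht (hv0 t (hvanish t h).1 (hvanish t h).2)) p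
  have hA := hint α (fun t => deriv f t ^ 2) (hdf.pow 2) fun t _ h => by simp [h]
  have hB := hint (α - 1) (fun t => f t * deriv f t) (hf.continuous.mul hdf)
    fun t h _ => by simp [h]
  have hC := hint (α - 2) (fun t => f t ^ 2) (hf.continuous.pow 2) fun t h _ => by simp [h]
  have hW := hint (α - 1) (fun t => f t ^ 2) (hf.continuous.pow 2) fun t h _ => by simp [h]
  have hIBP : (α - 1) * (∫ t, t ^ (α - 2) * f t ^ 2)
      + 2 * ∫ t, t ^ (α - 1) * (f t * deriv f t) = 0 := by
    rw [← integral_const_mul, ← integral_const_mul,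
      ← integral_add (hC.const_mul _) (hB.const_mul _)]
    exact integral_eq_zero_of_hasDerivAt_of_integrable
      (hasDerivAt_rpow_mul_sq (hf.differentiable one_ne_zero) hf0 α)
      ((hC.const_mul _).add (hB.const_mul _)) hW
  set c := (α - 1) / 2
  have hsq : 0 ≤ ∫ t, t ^ α * deriv f t ^ 2 + 2 * c * (t ^ (α - 1) * (f t * deriv f t))
      + c ^ 2 * (t ^ (α - 2) * f t ^ 2) := by
    refine integral_nonneg fun t => ?_
    by_cases ht : t ∈ tsupport f
    · exact rpow_completed_square_nonneg (hf0 ht) α c _ _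
    · simp [hvanish t ht]
  rw [integral_add ?_ (hC.const_mul _), integral_add hA (hB.const_mul _), integral_const_mul,
    integral_const_mul] at hsq
  · linear_combination hsq + c * hIBP
  · exact hA.add (hB.const_mul _)

lemma norm_gradient_eq_norm_fderiv {F : Type*} [NormedAddCommGroup F] [InnerProductSpace ℝ F]
    [CompleteSpace F] (u : F → ℝ) (x : F) : ‖gradient u x‖ = ‖fderiv ℝ u x‖ := by
  rw [← toDual_gradient, LinearIsometryEquiv.norm_map]

lemma sq_fderiv_apply_le_sq_norm_gradient {F : Type*} [NormedAddCommGroup F]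
    [InnerProductSpace ℝ F] [CompleteSpace F] (u : F → ℝ) (x : F) {v : F} (hv : ‖v‖ = 1) :
    fderiv ℝ u x v ^ 2 ≤ ‖gradient u x‖ ^ 2 := by
  have h := (fderiv ℝ u x).le_opNorm v
  rw [hv, mul_one] at h
  rw [norm_gradient_eq_norm_fderiv, ← sq_abs, ← Real.norm_eq_abs]
  exact pow_le_pow_left₀ (norm_nonneg _) h 2

local notation "ℝ²" => EuclideanSpace ℝ (Fin 2)

-- `planeEquiv (a, t)` is the point with coordinates `x = a`, `y = t`.
noncomputable def planeEquiv : (ℝ × ℝ) ≃L[ℝ] ℝ² :=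
  ((EuclideanSpace.equiv (Fin 2) ℝ).toContinuousLinearEquiv.trans
    (ContinuousLinearEquiv.finTwoArrow ℝ ℝ)).symm

@[simp]
lemma planeEquiv_apply_one (q : ℝ × ℝ) : planeEquiv q 1 = q.2 := rfl

lemma measurePreserving_planeEquiv : MeasurePreserving planeEquiv := by
  have : ⇑planeEquiv = ⇑((MeasurableEquiv.finTwoArrow (α := ℝ)).symm.trans
      (MeasurableEquiv.toLp 2 (Fin 2 → ℝ))) := rfl
  rw [this]
  exact (PiLp.volume_preserving_toLp (Fin 2)).comp (volume_preserving_finTwoArrow ℝ).symm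

lemma norm_planeEquiv_zero_one : ‖planeEquiv (0, 1)‖ = 1 := by
  have : planeEquiv (0, 1) = EuclideanSpace.single 1 1 := by
    ext i; fin_cases i <;> rfl
  simp [this]

lemma hasDerivAt_planeEquiv_slice (a t : ℝ) :
    HasDerivAt (fun s => planeEquiv (a, s)) (planeEquiv (0, 1)) t :=
  planeEquiv.hasFDerivAt.comp_hasDerivAt t ((hasDerivAt_const t a).prodMk (hasDerivAt_id t))

lemma integrable_rpow_mul_comp_planeEquiv {K : Set ℝ²} {v : ℝ² → ℝ} (hK : IsCompact K)
    (hKH : K ⊆ {x : ℝ² | 0 < x 1}) (hv : Continuous v) (hvK : Function.support v ⊆ K)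
    (p : ℝ) : Integrable (fun q : ℝ × ℝ => q.2 ^ p * v (planeEquiv q)) (volume.prod volume) :=
  integrable_rpow_mul_of_support_subset (planeEquiv.toHomeomorph.isCompact_preimage.mpr hK)
    (fun _ hq => hKH hq) continuous_snd (hv.comp planeEquiv.continuous) (fun _ hq => hvK hq) p

lemma setIntegral_rpow_mul_eq_integral_slices {K : Set ℝ²} {v : ℝ² → ℝ} (hK : IsCompact K)
    (hKH : K ⊆ {x : ℝ² | 0 < x 1}) (hv : Continuous v) (hvK : Function.support v ⊆ K)
    (p : ℝ) :
    ∫ x in {x : ℝ² | 0 < x 1}, x 1 ^ p * v x = ∫ a, ∫ t, t ^ p * v (planeEquiv (a, t)) := by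
  rw [setIntegral_eq_integral_of_forall_compl_eq_zero fun x hx => ?_,
    ← measurePreserving_planeEquiv.integral_comp planeEquiv.toHomeomorph.measurableEmbedding]
  · exact integral_prod _ (integrable_rpow_mul_comp_planeEquiv hK hKH hv hvK p)
  · rw [Function.notMem_support.mp fun h => hx (hKH (hvK h)), mul_zero]

lemma hardy_inequality_planeEquiv_slice (α : ℝ) {u : ℝ² → ℝ} (hu : ContDiff ℝ 1 u)
    (hu_supp : HasCompactSupport u) (hu_sub : tsupport u ⊆ {x | 0 < x 1}) (a : ℝ) :
    (1 - α) ^ 2 / 4 * ∫ t, t ^ (α - 2) * u (planeEquiv (a, t)) ^ 2 ≤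
      ∫ t, t ^ α * fderiv ℝ u (planeEquiv (a, t)) (planeEquiv (0, 1)) ^ 2 := by
  set f : ℝ → ℝ := fun t => u (planeEquiv (a, t))
  have hderiv (t : ℝ) : deriv f t = fderiv ℝ u (planeEquiv (a, t)) (planeEquiv (0, 1)) :=
    ((hu.differentiable one_ne_zero _).hasFDerivAt.comp_hasDerivAt t
      (hasDerivAt_planeEquiv_slice a t)).deriv
  have hf : ContDiff ℝ 1 f :=
    hu.comp (planeEquiv.contDiff.comp (contDiff_const.prodMk contDiff_id))
  have hfc : HasCompactSupport f :=
    HasCompactSupport.intro (hu_supp.image (PiLp.continuous_apply 2 _ 1))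
      fun t ht => image_eq_zero_of_notMem_tsupport (f := u) fun h =>
        ht ⟨planeEquiv (a, t), h, rfl⟩
  have hf0 : tsupport f ⊆ Ioi 0 :=
    (tsupport_comp_subset_preimage u
      (planeEquiv.continuous.comp (continuous_const.prodMk continuous_id))).trans fun _ ht => hu_sub ht
  simpa only [hderiv] using hardy_inequality_Ioi α hf hfc hf0

lemma hardy_inequality_upperHalfPlane_fderiv (α : ℝ) {u : ℝ² → ℝ} (hu : ContDiff ℝ 1 u)
    (hu_supp : HasCompactSupport u) (hu_sub : tsupport u ⊆ {x | 0 < x 1}) :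
    (1 - α) ^ 2 / 4 * ∫ x in {x : ℝ² | 0 < x 1}, x 1 ^ (α - 2) * u x ^ 2 ≤
      ∫ x in {x : ℝ² | 0 < x 1}, x 1 ^ α * fderiv ℝ u x (planeEquiv (0, 1)) ^ 2 := by
  have hu2 : Continuous fun x => u x ^ 2 := hu.continuous.pow 2
  have hu2K : Function.support (fun x => u x ^ 2) ⊆ tsupport u := fun x hx =>
    subset_tsupport u (by simpa using hx)
  have hdu : Continuous fun x => fderiv ℝ u x (planeEquiv (0, 1)) ^ 2 :=
    ((hu.continuous_fderiv one_ne_zero).clm_apply continuous_const).pow 2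
  have hduK : Function.support (fun x => fderiv ℝ u x (planeEquiv (0, 1)) ^ 2) ⊆ tsupport u :=
    fun x hx => by_contra fun h => hx (by simp [fderiv_of_notMem_tsupport ℝ h])
  rw [setIntegral_rpow_mul_eq_integral_slices hu_supp hu_sub hu2 hu2K,
    setIntegral_rpow_mul_eq_integral_slices hu_supp hu_sub hdu hduK, ← integral_const_mul]
  exact integral_mono
    ((integrable_rpow_mul_comp_planeEquiv hu_supp hu_sub hu2 hu2K _).integral_prod_left.const_mul _)
    (integrable_rpow_mul_comp_planeEquiv hu_supp hu_sub hdu hduK _).integral_prod_left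
    (hardy_inequality_planeEquiv_slice α hu hu_supp hu_sub)

theorem stmt19 (α : ℝ)
    (u : EuclideanSpace ℝ (Fin 2) → ℝ)
    (hu : ContDiff ℝ (⊤ : ℕ∞) u) (hu_supp : HasCompactSupport u)
    (hu_sub : tsupport u ⊆ {x : EuclideanSpace ℝ (Fin 2) | 0 < x 1}) :
    ((1 - α) ^ 2 / 4) *
        ∫ x in {x : EuclideanSpace ℝ (Fin 2) | 0 < x 1}, (x 1) ^ (α - 2) * u x ^ 2 ≤
      ∫ x in {x : EuclideanSpace ℝ (Fin 2) | 0 < x 1},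
        (x 1) ^ α * ‖gradient u x‖ ^ 2 := by
  have hu1 : ContDiff ℝ 1 u := hu.of_le (by exact_mod_cast le_top)
  have hy : Continuous fun x : ℝ² => x 1 := PiLp.continuous_apply 2 _ 1
  have hvanish (w : ℝ² → ℝ) (hw : ∀ x, fderiv ℝ u x = 0 → w x = 0) :
      Function.support w ⊆ tsupport u := fun x hx =>
    by_contra fun h => hx (hw x (fderiv_of_notMem_tsupport ℝ h))
  have hdu : Continuous (fderiv ℝ u) := hu1.continuous_fderiv one_ne_zero
  have hgrad : Continuous fun x => ‖gradient u x‖ ^ 2 := by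
    simp_rw [norm_gradient_eq_norm_fderiv]
    exact hdu.norm.pow 2
  refine (hardy_inequality_upperHalfPlane_fderiv α hu1 hu_supp hu_sub).trans
    (setIntegral_mono_on ?_ ?_ (measurableSet_lt continuous_const.measurable hy.measurable)
      fun x hx => mul_le_mul_of_nonneg_left
        (sq_fderiv_apply_le_sq_norm_gradient u x norm_planeEquiv_zero_one)
        (Real.rpow_nonneg (le_of_lt hx) α))
  · exact (integrable_rpow_mul_of_support_subset hu_supp hu_sub hy
      ((hdu.clm_apply continuous_const).pow 2) (hvanish _ fun x h => by simp [h]) α).integrableOn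
  · exact (integrable_rpow_mul_of_support_subset hu_supp hu_sub hy hgrad
      (hvanish _ fun x h => by simp [norm_gradient_eq_norm_fderiv, h]) α).integrableOn
end
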